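/- arXiv:2605.24731 — 3 statements merged into one kernel-verified Lean document; each statement's English description precedes it below -/
import Mathlib

section
/- For rotation matrices A, B ∈ SO(3), tr(A · sk(Aᵀ B)) ≥ (1/2) λ_min(A + Aᵀ) φ(Aᵀ B) + φ(A) − φ(B) holds with the sign convention: −(1/4) tr{(A + Aᵀ)(I₃ − Aᵀ B)} − (1/2)tr(I₃ − A) + (1/2)tr(I₃ − B) = −(1/2) tr(A · sk(Aᵀ B)), where φ(R) = (1/2) tr(I₃ − R). Equivalently: −(1/2) tr(A sk(Aᵀ B)) = −(1/4) tr{(A + Aᵀ)(I₃ − Aᵀ B)} − φ(A) + φ(B). -/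
open Matrix Real

noncomputable section

/-- The hat map: `hat ξ v = ξ × v`. -/
def hat (ξ : Fin 3 → ℝ) : Matrix (Fin 3) (Fin 3) ℝ :=
  !![0, -ξ 2, ξ 1; ξ 2, 0, -ξ 0; -ξ 1, ξ 0, 0]

/-- The vee map, inverse to the hat map on skew-symmetric matrices. -/
def vee (M : Matrix (Fin 3) (Fin 3) ℝ) : Fin 3 → ℝ := ![M 2 1, M 0 2, M 1 0]

/-- Skew-symmetric part. -/
def sk (M : Matrix (Fin 3) (Fin 3) ℝ) : Matrix (Fin 3) (Fin 3) ℝ := (1/2 : ℝ) • (M - Mᵀ)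

/-- Symmetric part. -/
def symPart (M : Matrix (Fin 3) (Fin 3) ℝ) : Matrix (Fin 3) (Fin 3) ℝ := (1/2 : ℝ) • (M + Mᵀ)

/-- Energy function `φ(R) = (1/2) tr(I₃ − R)`. -/
def phi (R : Matrix (Fin 3) (Fin 3) ℝ) : ℝ := (1/2) * ((1 : Matrix (Fin 3) (Fin 3) ℝ) - R).trace

/-- Membership in SO(3). -/
def IsSO3 (R : Matrix (Fin 3) (Fin 3) ℝ) : Prop := Rᵀ * R = 1 ∧ R.det = 1

/-- For `A, B ∈ SO(3)`:
`−(1/2) tr(A sk(Aᵀ B)) = −(1/4) tr{(A + Aᵀ)(I₃ − Aᵀ B)} − φ(A) + φ(B)`. -/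
theorem stmt_10 (A B : Matrix (Fin 3) (Fin 3) ℝ) (hA : IsSO3 A) (hB : IsSO3 B) :
    -(1/2) * (A * sk (Aᵀ * B)).trace =
      -(1/4) * ((A + Aᵀ) * ((1 : Matrix (Fin 3) (Fin 3) ℝ) - Aᵀ * B)).trace
        - phi A + phi B := by
  have hA2 : A * Aᵀ = 1 := mul_eq_one_comm.mp hA.1
  have ht : (A * (Bᵀ * A)).trace = (Aᵀ * (Aᵀ * B)).trace := by
    rw [← Matrix.trace_transpose (Aᵀ * (Aᵀ * B))]
    simp only [Matrix.transpose_mul, Matrix.transpose_transpose, Matrix.trace_transpose]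
    rw [Matrix.trace_mul_comm]
  simp only [sk, phi, Matrix.transpose_mul, Matrix.transpose_transpose, Matrix.mul_smul,
    Matrix.trace_smul, Matrix.mul_sub, Matrix.sub_mul, Matrix.mul_add, Matrix.add_mul,
    Matrix.mul_one, Matrix.one_mul, Matrix.trace_sub, Matrix.trace_add, ← Matrix.mul_assoc,
    hA2, Matrix.trace_transpose, smul_eq_mul]
  rw [Matrix.mul_assoc A Bᵀ A, ht, Matrix.mul_assoc Aᵀ Aᵀ B]
  ring
end
end

section
/- For A, B ∈ SO(3) with A + Aᵀ positive semi-definite, −(1/2) tr(A · sk(Aᵀ B)) ≤ −(1/2) λ_min(A + Aᵀ) φ(Aᵀ B) − φ(A) + φ(B), where φ(R) = (1/2) tr(I₃ − R) and sk(M) = (M − Mᵀ)/2. -/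
open Matrix Real

noncomputable section

variable {n : Type*} [Fintype n] [DecidableEq n]

lemma psd_trace_nonneg {X : Matrix n n ℝ} (hX : X.PosSemidef) : 0 ≤ X.trace := by
  rw [Matrix.trace]
  refine Finset.sum_nonneg fun i _ => ?_
  exact hX.diag_nonneg

lemma psd_mul_trace_nonneg {X Y : Matrix n n ℝ} (hX : X.PosSemidef) (hY : Y.PosSemidef) :
    0 ≤ (X * Y).trace := by
  obtain ⟨C, rfl⟩ : ∃ C : Matrix n n ℝ, Y = Cᴴ * C := by
    open scoped MatrixOrder in
    exact ⟨CFC.sqrt Y, by rw [(CFC.sqrt_nonneg Y).posSemidef.1.eq, CFC.sqrt_mul_sqrt_self Y hY.nonneg]⟩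
  rw [← Matrix.mul_assoc, Matrix.trace_mul_cycle]
  exact psd_trace_nonneg ((hX.mul_mul_conjTranspose_same C))

lemma sub_inf_smul_psd {M : Matrix n n ℝ} [Nonempty n] (hM : M.IsHermitian) :
    (M - (⨅ i, hM.eigenvalues i) • 1).PosSemidef := by
  set l := ⨅ i, hM.eigenvalues i with hl
  have hU := (Matrix.mem_unitaryGroup_iff).mp (hM.eigenvectorUnitary).2
  have key : M - l • 1 = (hM.eigenvectorUnitary : Matrix n n ℝ) *
      Matrix.diagonal (fun i => hM.eigenvalues i - l) *
      (star (hM.eigenvectorUnitary : Matrix n n ℝ)) := by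
    have h1 : (l • (1 : Matrix n n ℝ)) = (hM.eigenvectorUnitary : Matrix n n ℝ) *
        (l • (1 : Matrix n n ℝ)) * (star (hM.eigenvectorUnitary : Matrix n n ℝ)) := by
      rw [Matrix.mul_smul, Matrix.mul_one, Matrix.smul_mul, hU]
    conv_lhs => rw [hM.spectral_theorem, Unitary.conjStarAlgAut_apply, h1]
    rw [← Matrix.sub_mul, ← Matrix.mul_sub]
    congr 2
    ext i j
    by_cases h : i = j <;> simp [Matrix.diagonal, h, Matrix.one_apply]
  rw [key]
  refine (Matrix.posSemidef_diagonal_iff.mpr fun i => ?_).mul_mul_conjTranspose_same _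
  have : l ≤ hM.eigenvalues i := ciInf_le (Finite.bddBelow_range _) i
  linarith


/-- For `A, B ∈ SO(3)` with `A + Aᵀ` positive semi-definite,
`−(1/2) tr(A · sk(Aᵀ B)) ≤ −(1/2) λ_min(A + Aᵀ) φ(Aᵀ B) − φ(A) + φ(B)`. -/
theorem stmt_11 (A B : Matrix (Fin 3) (Fin 3) ℝ) (hA : IsSO3 A) (hB : IsSO3 B)
    (hP : (A + Aᵀ).PosSemidef) (hH : (A + Aᵀ).IsHermitian) :
    -(1/2) * (A * sk (Aᵀ * B)).trace ≤
      -(1/2) * (⨅ i, hH.eigenvalues i) * phi (Aᵀ * B) - phi A + phi B := by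
  have hAAT : A * Aᵀ = 1 := mul_eq_one_comm.mp hA.1
  set l := ⨅ i, hH.eigenvalues i with hl
  set tA := A.trace
  set tB := B.trace
  set tAB := (Aᵀ * B).trace with htAB
  set tABA := (A * Bᵀ * A).trace with htABA
  -- left-hand trace
  have h1 : (A * sk (Aᵀ * B)).trace = (1/2) * (tB - tABA) := by
    rw [sk, Matrix.mul_smul, Matrix.trace_smul, Matrix.mul_sub, Matrix.trace_sub,
      Matrix.transpose_mul, Matrix.transpose_transpose, ← Matrix.mul_assoc, hAAT,
      Matrix.one_mul, ← Matrix.mul_assoc]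
    simp [smul_eq_mul]; rfl
  -- trace identities
  have t2 : (Aᵀ * (Aᵀ * B)).trace = tABA := by
    calc (Aᵀ * (Aᵀ * B)).trace = (Bᵀ * A * A).trace := by
          rw [← Matrix.trace_transpose (Aᵀ * (Aᵀ * B))]
          simp only [Matrix.transpose_mul, Matrix.transpose_transpose, Matrix.mul_assoc]
      _ = (A * Bᵀ * A).trace := Matrix.trace_mul_cycle Bᵀ A A
      _ = tABA := htABA.symm
  have t3 : (Aᵀ * (Bᵀ * A)).trace = tB := by
    rw [Matrix.trace_mul_comm, Matrix.mul_assoc, hAAT, Matrix.mul_one, Matrix.trace_transpose]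
  -- N and its properties
  set N := (A - B)ᴴ * (A - B) with hNdef
  have hNpsd : N.PosSemidef := Matrix.posSemidef_conjTranspose_mul_self _
  have hNform : N = 1 + 1 - Aᵀ * B - Bᵀ * A := by
    have hct : (A - B)ᴴ = Aᵀ - Bᵀ := by
      ext i j; simp [Matrix.conjTranspose_apply, Matrix.transpose_apply, Matrix.sub_apply]
    rw [hNdef, hct, Matrix.sub_mul, Matrix.mul_sub, Matrix.mul_sub, hA.1, hB.1]
    abel
  have hNtr : N.trace = 6 - 2 * tAB := by
    rw [hNform]
    have : (Bᵀ * A).trace = tAB := by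
      rw [← Matrix.trace_transpose (Bᵀ * A)]; simp; rfl
    simp only [Matrix.trace_sub, Matrix.trace_add, Matrix.trace_one, this, htAB, Fintype.card_fin]
    push_cast
    ring
  -- trace of M * N
  have hMN : ((A + Aᵀ) * N).trace = 4 * tA - 2 * tB - 2 * tABA := by
    rw [hNform]
    simp only [Matrix.mul_sub, Matrix.mul_add, Matrix.add_mul, Matrix.mul_one,
      Matrix.trace_sub, Matrix.trace_add, Matrix.trace_transpose]
    rw [← Matrix.mul_assoc A Aᵀ B, hAAT, Matrix.one_mul, t2, t3,
      show (A * (Bᵀ * A)).trace = tABA by rw [← Matrix.mul_assoc]]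
    ring
  -- key PSD inequality
  have key : 0 ≤ ((A + Aᵀ) * N).trace - l * N.trace := by
    have h := psd_mul_trace_nonneg (sub_inf_smul_psd hH) hNpsd
    rwa [Matrix.sub_mul, Matrix.smul_mul, Matrix.one_mul, Matrix.trace_sub,
      Matrix.trace_smul, smul_eq_mul] at h
  rw [hMN, hNtr] at key
  -- unfold phi
  have hphiA : phi A = (1/2) * (3 - tA) := by
    simp [phi, Matrix.trace_sub, Matrix.trace_one]; rfl
  have hphiB : phi B = (1/2) * (3 - tB) := by
    simp [phi, Matrix.trace_sub, Matrix.trace_one]; rfl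
  have hphiAB : phi (Aᵀ * B) = (1/2) * (3 - tAB) := by
    simp [phi, Matrix.trace_sub, Matrix.trace_one, htAB]
  rw [h1, hphiA, hphiB, hphiAB]
  nlinarith [key]
end
end

section
/- Forward invariance of the half-rotation set: let R̄(t) ∈ SO(3) satisfy dR̄/dt = k_s R̄ sk(R̄ᵀ R_l(t)) with k_s > 0, and define h(t) = tr(R_rᵀ R̄(t)) − 1 for a fixed R_r ∈ SO(3). Suppose sym(R_rᵀ R_l(t)) is positive definite for all t, and h(0) ≥ 0. Then h(t) ≥ 0 for all t ≥ 0; equivalently, R_rᵀ R̄(t) + (R_rᵀ R̄(t))ᵀ remains positive semi-definite. -/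
open Matrix Real

noncomputable section

section Aux
abbrev Mat3 := Matrix (Fin 3) (Fin 3) ℝ

lemma ch3_generic (A : Mat3) :
    A * A * A - A.trace • (A * A) + (((A.trace)^2 - (A*A).trace)/2) • A - A.det • (1 : Mat3) = 0 := by
  ext i j
  fin_cases i <;> fin_cases j <;>
    simp [Matrix.mul_apply, Fin.sum_univ_three, Matrix.trace_fin_three, Matrix.det_fin_three,
      Matrix.smul_apply, Matrix.one_apply, Matrix.sub_apply, Matrix.add_apply] <;> ring

lemma trace_adjugate_fin3 (A : Mat3) : (adjugate A).trace = ((A.trace)^2 - (A*A).trace)/2 := by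
  rw [Matrix.adjugate_fin_three]
  simp [Matrix.trace_fin_three, Matrix.mul_apply, Fin.sum_univ_three]
  ring

variable {Q : Mat3}

lemma so3_adjugate (h1 : Qᵀ * Q = 1) (hd : Q.det = 1) : adjugate Q = Qᵀ := by
  calc adjugate Q = (Qᵀ * Q) * adjugate Q := by rw [h1, one_mul]
    _ = Qᵀ * (Q * adjugate Q) := by rw [mul_assoc]
    _ = Qᵀ := by rw [Matrix.mul_adjugate, hd, one_smul, mul_one]

lemma so3_e2 (h1 : Qᵀ * Q = 1) (hd : Q.det = 1) :
    ((Q.trace)^2 - (Q*Q).trace)/2 = Q.trace := by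
  rw [← trace_adjugate_fin3, so3_adjugate h1 hd, Matrix.trace_transpose]

lemma so3_ch (h1 : Qᵀ * Q = 1) (hd : Q.det = 1) :
    Q * Q * Q = Q.trace • (Q * Q) - Q.trace • Q + 1 := by
  have h := ch3_generic Q
  rw [so3_e2 h1 hd, hd, one_smul] at h
  have h' : Q * Q * Q - (Q.trace • (Q * Q) - Q.trace • Q + 1) = 0 := by
    rw [← h]; abel
  exact sub_eq_zero.mp h'

lemma so3_ch1 (h1 : Qᵀ * Q = 1) (hd : Q.det = 1) (hτ : Q.trace = 1) :
    Q * Q * Q = Q * Q - Q + 1 := by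
  have := so3_ch h1 hd; rwa [hτ, one_smul, one_smul] at this

lemma so3_q4 (h1 : Qᵀ * Q = 1) (hd : Q.det = 1) (hτ : Q.trace = 1) :
    Q * Q * (Q * Q) = 1 := by
  have ch := so3_ch1 h1 hd hτ
  calc Q * Q * (Q * Q) = Q * (Q * Q * Q) := by noncomm_ring
    _ = Q * (Q * Q - Q + 1) := by rw [ch]
    _ = Q * Q * Q - Q * Q + Q := by noncomm_ring
    _ = (Q * Q - Q + 1) - Q * Q + Q := by rw [ch]
    _ = 1 := by noncomm_ring

lemma so3_qt (h1 : Qᵀ * Q = 1) (hd : Q.det = 1) (hτ : Q.trace = 1) :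
    Qᵀ = Q * Q * Q := by
  have q4 := so3_q4 h1 hd hτ
  calc Qᵀ = Qᵀ * (Q * (Q * (Q * Q)))  := by
        rw [show Q * (Q * (Q * Q)) = Q * Q * (Q * Q) by noncomm_ring, q4, mul_one]
    _ = (Qᵀ * Q) * (Q * (Q * Q)) := by noncomm_ring
    _ = Q * Q * Q := by rw [h1, one_mul]; noncomm_ring

lemma so3_q2_symm (h1 : Qᵀ * Q = 1) (hd : Q.det = 1) (hτ : Q.trace = 1) :
    (Q * Q)ᵀ = Q * Q := by
  have q4 := so3_q4 h1 hd hτ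
  have qt := so3_qt h1 hd hτ
  calc (Q * Q)ᵀ = Qᵀ * Qᵀ := by rw [Matrix.transpose_mul]
    _ = (Q * Q * Q) * (Q * Q * Q) := by rw [qt]
    _ = (Q * Q * (Q * Q)) * (Q * Q) := by noncomm_ring
    _ = Q * Q := by rw [q4, one_mul]

lemma so3_traceQ2 (h1 : Qᵀ * Q = 1) (hd : Q.det = 1) (hτ : Q.trace = 1) :
    (Q * Q).trace = -1 := by
  have := so3_e2 h1 hd
  rw [hτ] at this; linarith

lemma trace_mul_pos (M P : Mat3) (hM : Mᵀ = M) (hMM : M * M = M + M)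
    (htr : M.trace = 4) (hP : P.PosDef) : 0 < (M * P).trace := by
  have hs : ∀ a b, M a b = M b a := fun a b =>
    (Matrix.transpose_apply M b a).symm.trans (congrFun (congrFun hM b) a)
  have h2 : (M * (P * M)).trace = 2 * (M * P).trace := by
    rw [show M * (P * M) = (M * P) * M by rw [mul_assoc], Matrix.trace_mul_comm (M * P) M,
      ← mul_assoc, hMM, Matrix.add_mul, Matrix.trace_add, two_mul]
  have hq : ∀ i, (M * (P * M)) i i = (fun j => M j i) ⬝ᵥ (P *ᵥ (fun j => M j i)) := by
    intro i
    simp only [Matrix.mul_apply, dotProduct, Matrix.mulVec]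
    exact Finset.sum_congr rfl fun j _ => by rw [hs i j]
  have hnn : ∀ i : Fin 3, 0 ≤ (M * (P * M)) i i := by
    intro i
    rw [hq i]
    simpa using hP.posSemidef.dotProduct_mulVec_nonneg (fun j => M j i)
  have hex : ∃ i : Fin 3, M i i ≠ 0 := by
    by_contra hc
    push_neg at hc
    rw [Matrix.trace_fin_three, hc 0, hc 1, hc 2] at htr; norm_num at htr
  obtain ⟨i, hi⟩ := hex
  have hpos : 0 < (M * (P * M)) i i := by
    rw [hq i]
    have hx : (fun j => M j i) ≠ 0 := by
      intro hx0
      exact hi (by simpa using congrFun hx0 i)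
    simpa using hP.dotProduct_mulVec_pos hx
  have htrpos : 0 < (M * (P * M)).trace := by
    rw [Matrix.trace]
    exact Finset.sum_pos' (fun j _ => hnn j) ⟨i, Finset.mem_univ i, hpos⟩
  linarith [h2 ▸ htrpos]

lemma psd_of_trace (Q : Mat3) (h1 : Qᵀ * Q = 1) (hd : Q.det = 1) (hτ : 1 ≤ Q.trace)
    (hch : Q * Q * Q = Q.trace • (Q * Q) - Q.trace • Q + 1) :
    (Q + Qᵀ).PosSemidef := by
  have h2 : Q * Qᵀ = 1 := mul_eq_one_comm.mp h1
  set τ := Q.trace with hτdef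
  set P := Q + Qᵀ with hP
  have hPt : Pᵀ = P := by rw [hP, Matrix.transpose_add, Matrix.transpose_transpose, add_comm]
  have hq4 : Q * Q * (Q * Q) = τ • (Q * Q * Q) - τ • (Q * Q) + Q := by
    calc Q * Q * (Q * Q) = Q * (Q * Q * Q) := by noncomm_ring
      _ = Q * (τ • (Q * Q) - τ • Q + 1) := by rw [hch]
      _ = τ • (Q * Q * Q) - τ • (Q * Q) + Q := by
          rw [mul_add, mul_sub, mul_smul_comm, mul_smul_comm, mul_one, mul_assoc]
  have inv2 : (Q * Q) * (Qᵀ * Qᵀ) = 1 := by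
    calc (Q * Q) * (Qᵀ * Qᵀ) = Q * ((Q * Qᵀ) * Qᵀ) := by noncomm_ring
      _ = 1 := by rw [h2, one_mul, h2]
  have e2 : Qᵀ * Qᵀ * (Q * Q) = 1 := by
    calc Qᵀ * Qᵀ * (Q * Q) = Qᵀ * ((Qᵀ * Q) * Q) := by noncomm_ring
      _ = 1 := by rw [h1, one_mul, h1]
  have e1 : P * P = Q * Q + Qᵀ * Qᵀ + (2:ℝ) • (1 : Mat3) := by
    rw [hP, add_mul, mul_add, mul_add, h1, h2]
    module
  have E : (P * P) * (Q * Q) = ((τ + 1) • P - (2 * τ - 2) • (1 : Mat3)) * (Q * Q) := by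
    have lhs : (P * P) * (Q * Q) = Q * Q * (Q * Q) + (2:ℝ) • (Q * Q) + 1 := by
      rw [e1, add_mul, add_mul, e2, smul_mul_assoc, one_mul]
      module
    have rhs : ((τ + 1) • P - (2 * τ - 2) • (1 : Mat3)) * (Q * Q)
        = (τ + 1) • (Q * Q * Q + Q) - (2 * τ - 2) • (Q * Q) := by
      rw [hP, Matrix.sub_mul, smul_mul_assoc, smul_mul_assoc, one_mul, add_mul]
      congr 2
      rw [← mul_assoc]
      congr 1
      rw [← mul_assoc, h1, one_mul]
    rw [lhs, rhs, hq4, hch]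
    module
  have key : P * P = (τ + 1) • P - (2 * τ - 2) • (1 : Mat3) := by
    calc P * P = (P * P) * ((Q * Q) * (Qᵀ * Qᵀ)) := by rw [inv2, mul_one]
      _ = ((P * P) * (Q * Q)) * (Qᵀ * Qᵀ) := (mul_assoc _ _ _).symm
      _ = (((τ + 1) • P - (2 * τ - 2) • (1 : Mat3)) * (Q * Q)) * (Qᵀ * Qᵀ) := by rw [E]
      _ = ((τ + 1) • P - (2 * τ - 2) • (1 : Mat3)) * ((Q * Q) * (Qᵀ * Qᵀ)) := mul_assoc _ _ _
      _ = (τ + 1) • P - (2 * τ - 2) • (1 : Mat3) := by rw [inv2, mul_one]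
  refine Matrix.PosSemidef.of_dotProduct_mulVec_nonneg ?_ ?_
  · show Pᴴ = P
    rw [Matrix.conjTranspose_eq_transpose_of_trivial]
    exact hPt
  · intro x
    have hsq : 0 ≤ (P *ᵥ x) ⬝ᵥ (P *ᵥ x) := Finset.sum_nonneg fun j _ => mul_self_nonneg _
    have hPP : x ⬝ᵥ ((P * P) *ᵥ x) = (P *ᵥ x) ⬝ᵥ (P *ᵥ x) := by
      rw [← Matrix.mulVec_mulVec, Matrix.dotProduct_mulVec x P, ← Matrix.mulVec_transpose, hPt]
    have hPP2 : x ⬝ᵥ ((P * P) *ᵥ x) = (τ + 1) * (x ⬝ᵥ (P *ᵥ x)) - (2 * τ - 2) * (x ⬝ᵥ x) := by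
      rw [key, Matrix.sub_mulVec, Matrix.smul_mulVec, Matrix.smul_mulVec,
        Matrix.one_mulVec, dotProduct_sub, dotProduct_smul, dotProduct_smul]
      simp [smul_eq_mul]
    have hxx : 0 ≤ x ⬝ᵥ x := Finset.sum_nonneg fun j _ => mul_self_nonneg _
    have hge : 0 ≤ (τ + 1) * (x ⬝ᵥ (P *ᵥ x)) - (2 * τ - 2) * (x ⬝ᵥ x) := by
      rw [← hPP2, hPP]; exact hsq
    have hq : 0 ≤ x ⬝ᵥ (P *ᵥ x) := by nlinarith
    simpa using hq

lemma deriv_pos (ks : ℝ) (hks : 0 < ks) (Rr B L : Mat3)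
    (hRr1 : Rrᵀ * Rr = 1) (hRrd : Rr.det = 1) (hB1 : Bᵀ * B = 1) (hBd : B.det = 1)
    (hPD : (symPart (Rrᵀ * L)).PosDef) (hτ : (Rrᵀ * B).trace = 1) :
    0 < (Rrᵀ * (ks • (B * sk (Bᵀ * L)))).trace := by
  have hRr2 : Rr * Rrᵀ = 1 := mul_eq_one_comm.mp hRr1
  have hB2 : B * Bᵀ = 1 := mul_eq_one_comm.mp hB1
  set Q : Mat3 := Rrᵀ * B with hQ
  set A : Mat3 := Rrᵀ * L with hA
  set S : Mat3 := Bᵀ * L with hS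
  have hQ1 : Qᵀ * Q = 1 := by
    rw [hQ, Matrix.transpose_mul, Matrix.transpose_transpose]
    calc Bᵀ * Rr * (Rrᵀ * B) = Bᵀ * ((Rr * Rrᵀ) * B) := by noncomm_ring
      _ = 1 := by rw [hRr2, one_mul, hB1]
  have hQd : Q.det = 1 := by
    rw [hQ, Matrix.det_mul, Matrix.det_transpose, hRrd, hBd, one_mul]
  set M : Mat3 := 1 - Q * Q with hM
  have hMsym : Mᵀ = M := by
    rw [hM, Matrix.transpose_sub, Matrix.transpose_one, so3_q2_symm hQ1 hQd hτ]
  have hMM : M * M = M + M := by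
    have q4 := so3_q4 hQ1 hQd hτ
    rw [hM]
    calc (1 - Q * Q) * (1 - Q * Q) = 1 - Q * Q - Q * Q + Q * Q * (Q * Q) := by noncomm_ring
      _ = 1 - Q * Q - Q * Q + 1 := by rw [q4]
      _ = (1 - Q * Q) + (1 - Q * Q) := by noncomm_ring
  have hMtr : M.trace = 4 := by
    rw [hM, Matrix.trace_sub, so3_traceQ2 hQ1 hQd hτ, Matrix.trace_one]
    norm_num
  have hQS : Q * S = A := by
    rw [hQ, hS]
    calc (Rrᵀ * B) * (Bᵀ * L) = Rrᵀ * ((B * Bᵀ) * L) := by noncomm_ring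
      _ = A := by rw [hB2, one_mul, hA]
  have hST : Sᵀ = Aᵀ * Q := by
    rw [hS, hA, hQ, Matrix.transpose_mul, Matrix.transpose_transpose, Matrix.transpose_mul,
      Matrix.transpose_transpose]
    calc Lᵀ * B = Lᵀ * ((Rr * Rrᵀ) * B) := by rw [hRr2, one_mul]
      _ = Lᵀ * Rr * (Rrᵀ * B) := by noncomm_ring
  have hMA : (Q * Sᵀ).trace = Aᵀ.trace - (M * Aᵀ).trace := by
    have hMA1 : M * Aᵀ = Aᵀ - Q * Q * Aᵀ := by rw [hM, Matrix.sub_mul, one_mul]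
    rw [hMA1, Matrix.trace_sub]
    have h1 : (Q * Sᵀ).trace = (Q * Q * Aᵀ).trace := by
      rw [hST, ← mul_assoc, Matrix.trace_mul_comm (Q * Aᵀ) Q, ← mul_assoc]
    rw [h1]; ring
  have hMAt : (M * Aᵀ).trace = (M * symPart A).trace := by
    have hsymm : (M * Aᵀ).trace = (M * A).trace := by
      rw [← Matrix.trace_transpose (M * Aᵀ), Matrix.transpose_mul, Matrix.transpose_transpose,
        hMsym, Matrix.trace_mul_comm]
    rw [symPart, Matrix.mul_smul, Matrix.trace_smul, Matrix.mul_add, Matrix.trace_add, hsymm]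
    simp [smul_eq_mul]; ring
  have hQsk : Q * sk S = (1/2 : ℝ) • (Q * S - Q * Sᵀ) := by
    rw [sk, Matrix.mul_smul, Matrix.mul_sub]
  have hfinal : (Rrᵀ * (ks • (B * sk S))).trace = ks * ((1/2) * (M * symPart A).trace) := by
    rw [Matrix.mul_smul, Matrix.trace_smul, smul_eq_mul]
    congr 1
    rw [← mul_assoc, ← hQ, hQsk, Matrix.trace_smul, smul_eq_mul, Matrix.trace_sub, hQS, hMA,
      Matrix.trace_transpose, ← hMAt]
    ring
  rw [hfinal]
  have := trace_mul_pos M (symPart A) hMsym hMM hMtr hPD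
  positivity

end Aux

/-- Forward invariance of the half-rotation set: if `dR̄/dt = k_s R̄ sk(R̄ᵀ R_l)`,
`sym(R_rᵀ R_l(t))` is positive definite for all `t`, and `h(0) = tr(R_rᵀ R̄(0)) − 1 ≥ 0`,
then `h(t) ≥ 0` for all `t ≥ 0`; equivalently `R_rᵀ R̄(t) + (R_rᵀ R̄(t))ᵀ` remains
positive semi-definite. -/
theorem stmt_15 (ks : ℝ) (hks : 0 < ks)
    (Rr : Matrix (Fin 3) (Fin 3) ℝ) (hRr : IsSO3 Rr)
    (Rb Rl : ℝ → Matrix (Fin 3) (Fin 3) ℝ)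
    (hSO : ∀ t, IsSO3 (Rb t) ∧ IsSO3 (Rl t))
    (hcont : ∀ i j, Continuous fun t => Rl t i j)
    (hRb : ∀ t, ∀ i j, HasDerivAt (fun s => Rb s i j)
      ((ks • (Rb t * sk ((Rb t)ᵀ * Rl t))) i j) t)
    (hPD : ∀ t, (symPart (Rrᵀ * Rl t)).PosDef)
    (h0 : 0 ≤ (Rrᵀ * Rb 0).trace - 1) :
    ∀ t, 0 ≤ t →
      0 ≤ (Rrᵀ * Rb t).trace - 1 ∧ (Rrᵀ * Rb t + (Rrᵀ * Rb t)ᵀ).PosSemidef := by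
  set h : ℝ → ℝ := fun s => (Rrᵀ * Rb s).trace - 1 with hh
  set D : ℝ → ℝ := fun s => (Rrᵀ * (ks • (Rb s * sk ((Rb s)ᵀ * Rl s)))).trace with hD
  have htr_eq : ∀ X : Mat3, (Rrᵀ * X).trace = ∑ i : Fin 3, ∑ j : Fin 3, Rrᵀ i j * X j i := by
    intro X; simp [Matrix.trace, Matrix.diag, Matrix.mul_apply]
  have hderiv : ∀ t, HasDerivAt h (D t) t := by
    intro t
    have hsum : HasDerivAt (fun s => ∑ i : Fin 3, ∑ j : Fin 3, Rrᵀ i j * Rb s j i)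
        (∑ i : Fin 3, ∑ j : Fin 3, Rrᵀ i j * (ks • (Rb t * sk ((Rb t)ᵀ * Rl t))) j i) t := by
      apply HasDerivAt.fun_sum
      intro i _
      apply HasDerivAt.fun_sum
      intro j _
      exact (hRb t j i).const_mul _
    have h1 : HasDerivAt h
        (∑ i : Fin 3, ∑ j : Fin 3, Rrᵀ i j * (ks • (Rb t * sk ((Rb t)ᵀ * Rl t))) j i) t := by
      rw [hh]
      simp only [htr_eq]
      exact hsum.sub_const 1
    rw [show D t = ∑ i : Fin 3, ∑ j : Fin 3, Rrᵀ i j * (ks • (Rb t * sk ((Rb t)ᵀ * Rl t))) j i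
      from htr_eq _]
    exact h1
  have hQ1 : ∀ t, (Rrᵀ * Rb t)ᵀ * (Rrᵀ * Rb t) = 1 := by
    intro t
    rw [Matrix.transpose_mul, Matrix.transpose_transpose]
    have hRr2 : Rr * Rrᵀ = 1 := mul_eq_one_comm.mp hRr.1
    calc (Rb t)ᵀ * Rr * (Rrᵀ * Rb t) = (Rb t)ᵀ * ((Rr * Rrᵀ) * Rb t) := by noncomm_ring
      _ = 1 := by rw [hRr2, one_mul, (hSO t).1.1]
  have hQd : ∀ t, (Rrᵀ * Rb t).det = 1 := by
    intro t
    rw [Matrix.det_mul, Matrix.det_transpose, hRr.2, (hSO t).1.2, one_mul]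
  have hKey : ∀ s, h s = 0 → 0 < D s := by
    intro s hs
    have hτ : (Rrᵀ * Rb s).trace = 1 := by
      have : (Rrᵀ * Rb s).trace - 1 = 0 := hs
      linarith
    exact deriv_pos ks hks Rr (Rb s) (Rl s) hRr.1 hRr.2 (hSO s).1.1 (hSO s).1.2 (hPD s) hτ
  have hcont_h : Continuous h := by
    have hcontRb : ∀ i j, Continuous fun s => Rb s i j := by
      intro i j
      rw [continuous_iff_continuousAt]
      exact fun t => (hRb t i j).continuousAt
    rw [hh]
    simp only [htr_eq]
    exact (continuous_finset_sum _ fun i _ => continuous_finset_sum _ fun j _ =>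
      (continuous_const.mul (hcontRb j i))).sub continuous_const
  have hmain : ∀ t, 0 ≤ t → 0 ≤ h t := by
    intro t ht
    by_contra hneg
    push_neg at hneg
    have ht0 : t ≠ 0 := fun he => by rw [he] at hneg; exact absurd h0 (not_le.mpr hneg)
    have htpos : 0 < t := lt_of_le_of_ne ht (Ne.symm ht0)
    set K : Set ℝ := Set.Icc 0 t ∩ {s | 0 ≤ h s} with hK
    have hKclosed : IsClosed K := isClosed_Icc.inter (isClosed_le continuous_const hcont_h)
    have hKne : K.Nonempty := ⟨0, ⟨le_refl 0, le_of_lt htpos⟩, h0⟩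
    have hKbdd : BddAbove K := ⟨t, fun x hx => hx.1.2⟩
    set σ := sSup K with hσ
    have hσK : σ ∈ K := hKclosed.csSup_mem hKne hKbdd
    have hσt : σ ≤ t := hσK.1.2
    have hσ0 : 0 ≤ σ := hσK.1.1
    have hσne : σ ≠ t := fun he => by
      have := hσK.2
      rw [he] at this
      exact absurd this (not_le.mpr hneg)
    have hσlt : σ < t := lt_of_le_of_ne hσt hσne
    have hIoo : ∀ u, σ < u → u ≤ t → h u < 0 := by
      intro u hu hut
      by_contra hc
      push_neg at hc
      have : u ∈ K := ⟨⟨le_trans hσ0 (le_of_lt hu), hut⟩, hc⟩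
      exact absurd (le_csSup hKbdd this) (not_le.mpr hu)
    have hσ_le : h σ ≤ 0 := by
      have hev : ∀ᶠ u in nhdsWithin σ (Set.Ioi σ), h u ≤ 0 := by
        filter_upwards [Ioc_mem_nhdsGT_of_mem ⟨le_refl σ, hσlt⟩] with u hu
        exact le_of_lt (hIoo u hu.1 hu.2)
      exact le_of_tendsto ((hcont_h.continuousAt).tendsto.mono_left nhdsWithin_le_nhds) hev
    have hσ_eq : h σ = 0 := le_antisymm hσ_le hσK.2
    have hDσ : 0 < D σ := hKey σ hσ_eq
    have hslope : Filter.Tendsto (slope h σ) (nhdsWithin σ {σ}ᶜ) (nhds (D σ)) :=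
      hasDerivAt_iff_tendsto_slope.mp (hderiv σ)
    have hslope' : ∀ᶠ u in nhdsWithin σ (Set.Ioi σ), 0 < slope h σ u := by
      have := hslope.eventually (eventually_gt_nhds hDσ)
      exact this.filter_mono (nhdsWithin_mono σ (fun u hu => ne_of_gt hu))
    have hmem : ∀ᶠ u in nhdsWithin σ (Set.Ioi σ), u ∈ Set.Ioc σ t :=
      Ioc_mem_nhdsGT_of_mem ⟨le_refl σ, hσlt⟩
    obtain ⟨u, hu1, hu2⟩ := (hslope'.and hmem).exists
    have hupos : 0 < u - σ := sub_pos.mpr hu2.1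
    have hupos2 : 0 < h u - h σ := by
      have := mul_pos hu1 hupos
      rwa [slope_def_field, div_mul_cancel₀] at this
      exact ne_of_gt hupos
    rw [hσ_eq, sub_zero] at hupos2
    exact absurd (hIoo u hu2.1 hu2.2) (not_lt.mpr (le_of_lt hupos2))
  intro t ht
  refine ⟨hmain t ht, ?_⟩
  have hτ : 1 ≤ (Rrᵀ * Rb t).trace := by
    have h' : 0 ≤ (Rrᵀ * Rb t).trace - 1 := hmain t ht
    linarith
  exact psd_of_trace _ (hQ1 t) (hQd t) hτ (so3_ch (hQ1 t) (hQd t))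
end
end
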